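/- Let E be a countable amplified directed graph. Define Ē⁰ := {H ∈ ℋ_vert : H ⊆ H₀ and H ⊄ lt₁(H₀)}, Ē¹ := {(H, n, K) : H, K ∈ Ē⁰, lt₁(K) ⊆ H, n ∈ ℕ}, and maps s̄, r̄ : Ē¹ → Ē⁰ by s̄(H, n, K) = H and r̄(H, n, K) = K. Then Ē := (Ē⁰, Ē¹, r̄, s̄) is a countable amplified directed graph, and there is an isomorphism of directed graphs E ≅ Ē whose vertex map carries each v ∈ E⁰ to H(v, 0), the hereditary subset of (E ×₁ ℤ)⁰ generated by (v, 0). -/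

import Mathlib

/-- A directed graph: a set of vertices, a set of edges, and range and source maps. -/
structure DirGraph where
  V : Type
  E : Type
  r : E → V
  s : E → V

namespace DirGraph

variable (G : DirGraph)

/-- The skew-product graph `E ×₁ ℤ`. -/
def skew : DirGraph where
  V := G.V × ℤ
  E := G.E × ℤ
  r := fun e => (G.r e.1, e.2 + 1)
  s := fun e => (G.s e.1, e.2)

/-- `G.PathRel v w n` : there is a path of length `n` from `v` to `w`
(vertices are paths of length `0`). -/
inductive PathRel : G.V → G.V → ℕ → Prop
  | nil (v : G.V) : PathRel v v 0
  | cons (e : G.E) {w : G.V} {n : ℕ} : PathRel (G.r e) w n → PathRel (G.s e) w (n + 1)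

/-- A set of vertices is hereditary if it contains the range of every edge whose
source it contains. -/
def Hereditary (H : Set G.V) : Prop := ∀ e : G.E, G.s e ∈ H → G.r e ∈ H

/-- `H(v, n)`: the smallest hereditary subset of `(E ×₁ ℤ)⁰` containing `(v, n)`. -/
def Hgen (v : G.V) (n : ℤ) : Set (G.V × ℤ) :=
  ⋂₀ {K : Set (G.V × ℤ) | G.skew.Hereditary K ∧ (v, n) ∈ K}

/-- The translation action `lt_k(H) = {(v, n + k) : (v, n) ∈ H}`. -/
def lt (k : ℤ) (H : Set (G.V × ℤ)) : Set (G.V × ℤ) :=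
  (fun p : G.V × ℤ => (p.1, p.2 + k)) '' H

/-- The hereditary set `H₀ = {(v, n) : v ∈ E⁰, n ≥ 0}`. -/
def H0 : Set (G.V × ℤ) := {p | 0 ≤ p.2}

/-- A graph is amplified if for all vertices `v, w` the set `vE¹w` of edges from `v`
to `w` is empty or infinite. -/
def Amplified : Prop :=
  ∀ v w : G.V, {e : G.E | G.s e = v ∧ G.r e = w} = ∅ ∨ {e : G.E | G.s e = v ∧ G.r e = w}.Infinite

/-- A graph is connected if the smallest equivalence relation on the vertices containing
`{(s e, r e) : e ∈ E¹}` is everything. -/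
def Connected : Prop :=
  ∀ v w : G.V, Relation.EqvGen (fun a b => ∃ e : G.E, G.s e = a ∧ G.r e = b) v w

/-- `L` has a unique predecessor in the poset of hereditary subsets of `(E ×₁ ℤ)⁰`. -/
def UniquePred (L : Set (G.V × ℤ)) : Prop :=
  ∃ K : Set (G.V × ℤ), G.skew.Hereditary K ∧ K ⊂ L ∧
    ∀ K' : Set (G.V × ℤ), G.skew.Hereditary K' → K' ⊂ L → K' ⊆ K

/-- `ℋ_vert`: the hereditary subsets of `(E ×₁ ℤ)⁰` having a unique predecessor. -/
def HVert : Set (Set (G.V × ℤ)) := {L | G.skew.Hereditary L ∧ G.UniquePred L}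

/-- `V₀ = {H(v, 0) : v ∈ E⁰}`. -/
def V0 : Set (Set (G.V × ℤ)) := {L | ∃ v : G.V, L = G.Hgen v 0}


theorem lt_hereditary (k : ℤ) {H : Set (G.V × ℤ)}
    (hH : G.skew.Hereditary H) : G.skew.Hereditary (G.lt k H) := by
  rintro ⟨f, m⟩ hs
  obtain ⟨⟨v, n⟩, hvn, heq⟩ := hs
  have h1 : v = G.s f := congrArg Prod.fst heq
  have h2 : n + k = m := congrArg Prod.snd heq
  subst h1
  refine ⟨(G.r f, n + 1), hH (f, n) hvn, ?_⟩
  show ((G.r f : G.V), n + 1 + k) = (G.r f, m + 1)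
  rw [Prod.ext_iff]
  exact ⟨rfl, by omega⟩

theorem H0_hereditary : G.skew.Hereditary G.H0 := by
  rintro ⟨f, m⟩ hm
  have : 0 ≤ m := hm
  show 0 ≤ m + 1
  omega

/-- The hereditary subsets of the skew-product graph, as a type. -/
def HS := {L : Set (G.V × ℤ) // G.skew.Hereditary L}

/-- Translation on hereditary subsets of the skew product. -/
def ltH (k : ℤ) (A : G.HS) : G.HS := ⟨G.lt k A.1, G.lt_hereditary k A.2⟩

/-- `H₀` as an element of `G.HS`. -/
def H0H : G.HS := ⟨G.H0, G.H0_hereditary⟩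

/-- The vertex set `Ē⁰` of the graph recovered from `(ℋ(E ×₁ ℤ), ⊆, lt, H₀)`. -/
def Ebar0 : Set (Set (G.V × ℤ)) := {L | L ∈ G.HVert ∧ L ⊆ G.H0 ∧ ¬ L ⊆ G.lt 1 G.H0}

/-- The graph `Ē` recovered from `(ℋ(E ×₁ ℤ), ⊆, lt, H₀)`. -/
noncomputable def Ebar : DirGraph where
  V := G.Ebar0
  E := {t : Set (G.V × ℤ) × ℕ × Set (G.V × ℤ) //
          t.1 ∈ G.Ebar0 ∧ t.2.2 ∈ G.Ebar0 ∧ G.lt 1 t.2.2 ⊆ t.1}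
  s := fun t => ⟨t.1.1, t.2.1⟩
  r := fun t => ⟨t.1.2.2, t.2.2.1⟩

end DirGraph

/-!
`H(v, n)` consists of the `(w, n + k)` such that there is a path of length `k` from `v` to `w`.
It has a unique predecessor, `H(v, n)` without its generator; conversely a hereditary set with
a unique predecessor is generated by one vertex, which lies on level `0` if the set lies in `H₀`
but not in `lt₁(H₀)`. So `v ↦ H(v, 0)` is a bijection `E⁰ → Ē⁰`, and `lt₁(H(w, 0)) ⊆ H(v, 0)`
exactly when `vE¹w` is nonempty. In two countable amplified graphs every nonempty `vE¹w` is
countably infinite, so a bijection of vertices preserving adjacency lifts to the edges fibre by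
fibre.
-/

theorem nonempty_equiv_of_eq_empty_or_infinite {α β : Type*} [Countable α] [Countable β]
    {s : Set α} {t : Set β} (hs : s = ∅ ∨ s.Infinite) (ht : t = ∅ ∨ t.Infinite)
    (hst : s.Nonempty ↔ t.Nonempty) : Nonempty (s ≃ t) := by
  rcases hs with rfl | hs
  · rcases ht with rfl | ht
    · exact ⟨Equiv.equivOfIsEmpty _ _⟩
    · exact absurd (hst.mpr ht.nonempty) Set.not_nonempty_empty
  · rcases ht with rfl | ht
    · exact absurd (hst.mp hs.nonempty) Set.not_nonempty_empty
    · have := hs.to_subtype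
      have := ht.to_subtype
      exact nonempty_equiv_of_countable

namespace DirGraph

/-- The set `vE¹w`. -/
def edgesBetween (G : DirGraph) (v w : G.V) : Set G.E := {e | G.s e = v ∧ G.r e = w}

theorem exists_edge_equiv_of_amplified {G G' : DirGraph} [Countable G.E] [Countable G'.E]
    (hG : G.Amplified) (hG' : G'.Amplified) (φ₀ : G.V ≃ G'.V)
    (hadj : ∀ v w, (G.edgesBetween v w).Nonempty ↔ (G'.edgesBetween (φ₀ v) (φ₀ w)).Nonempty) :
    ∃ φ₁ : G.E ≃ G'.E, ∀ e, G'.s (φ₁ e) = φ₀ (G.s e) ∧ G'.r (φ₁ e) = φ₀ (G.r e) := by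
  have fiber (c : G'.V × G'.V) : Nonempty ({e // (φ₀ (G.s e), φ₀ (G.r e)) = c} ≃
      {e' // (G'.s e', G'.r e') = c}) := by
    obtain ⟨⟨a, b⟩, rfl⟩ := (φ₀.prodCongr φ₀).surjective c
    obtain ⟨ψ⟩ := nonempty_equiv_of_eq_empty_or_infinite (hG a b) (hG' (φ₀ a) (φ₀ b)) (hadj a b)
    exact ⟨(Equiv.subtypeEquivRight fun e => by simp).trans <|
      ψ.trans (Equiv.subtypeEquivRight fun e' => by simp)⟩
  refine ⟨Equiv.ofFiberEquiv fun c => (fiber c).some, fun e => ?_⟩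
  exact Prod.ext_iff.mp (Equiv.ofFiberEquiv_map (fun c => (fiber c).some) e)

theorem PathRel.trans {G : DirGraph} {u v w : G.V} {k l : ℕ} (huv : G.PathRel u v k)
    (hvw : G.PathRel v w l) : G.PathRel u w (l + k) := by
  induction huv with
  | nil => exact hvw
  | cons e _ ih => exact PathRel.cons e (ih hvw)

theorem PathRel.snoc {G : DirGraph} {v : G.V} {k : ℕ} (e : G.E) (h : G.PathRel v (G.s e) k) :
    G.PathRel v (G.r e) (k + 1) := by
  simpa [add_comm] using h.trans (PathRel.cons e (PathRel.nil (G.r e)))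

theorem PathRel.mem_of_hereditary {G : DirGraph} {v w : G.V} {k : ℕ} (h : G.PathRel v w k)
    {K : Set (G.V × ℤ)} (hK : G.skew.Hereditary K) {n : ℤ} (hv : (v, n) ∈ K) :
    (w, n + k) ∈ K := by
  induction h generalizing n with
  | nil => simpa using hv
  | @cons e _ k _ ih =>
    have := ih (hK (e, n) hv)
    rwa [Nat.cast_succ, add_comm (k : ℤ), ← add_assoc]

variable (G : DirGraph)

theorem pathRel_zero_iff {v w : G.V} : G.PathRel v w 0 ↔ w = v := by
  refine ⟨fun h => ?_, fun h => h ▸ PathRel.nil v⟩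
  cases h
  rfl

theorem pathRel_one_iff {v w : G.V} : G.PathRel v w 1 ↔ (G.edgesBetween v w).Nonempty := by
  refine ⟨fun h => ?_, fun ⟨e, hs, hr⟩ => hs ▸ hr ▸ PathRel.cons e (PathRel.nil _)⟩
  cases h with
  | cons e h => exact ⟨e, rfl, ((G.pathRel_zero_iff).mp h).symm⟩

theorem mem_hgen_iff {v w : G.V} {n m : ℤ} :
    (w, m) ∈ G.Hgen v n ↔ ∃ k : ℕ, m = n + k ∧ G.PathRel v w k := by
  constructor
  · intro h
    refine Set.mem_sInter.mp h {p | ∃ k : ℕ, p.2 = n + k ∧ G.PathRel v p.1 k}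
      ⟨?_, 0, by simp, PathRel.nil v⟩
    rintro ⟨f, j⟩ ⟨k, hk, hp⟩
    exact ⟨k + 1, by simp only [skew] at hk ⊢; omega, hp.snoc f⟩
  · rintro ⟨k, rfl, hp⟩
    exact Set.mem_sInter.mpr fun K hK => hp.mem_of_hereditary hK.1 hK.2

theorem hgen_hereditary (v : G.V) (n : ℤ) : G.skew.Hereditary (G.Hgen v n) :=
  fun f hf => Set.mem_sInter.mpr fun K hK => hK.1 f (Set.mem_sInter.mp hf K hK)

theorem mem_hgen_self (v : G.V) (n : ℤ) : (v, n) ∈ G.Hgen v n :=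
  G.mem_hgen_iff.mpr ⟨0, by simp, PathRel.nil v⟩

theorem hgen_subset {v : G.V} {n : ℤ} {K : Set (G.V × ℤ)} (hK : G.skew.Hereditary K)
    (h : (v, n) ∈ K) : G.Hgen v n ⊆ K :=
  Set.sInter_subset_of_mem ⟨hK, h⟩

theorem le_of_mem_hgen {v w : G.V} {n m : ℤ} (h : (w, m) ∈ G.Hgen v n) : n ≤ m := by
  obtain ⟨k, rfl, -⟩ := G.mem_hgen_iff.mp h
  omega

theorem mem_hgen_same_level_iff {v w : G.V} {n : ℤ} : (w, n) ∈ G.Hgen v n ↔ w = v := by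
  rw [mem_hgen_iff, ← pathRel_zero_iff]
  constructor
  · rintro ⟨k, hk, hp⟩
    obtain rfl : k = 0 := by omega
    exact hp
  · exact fun hp => ⟨0, by simp, hp⟩

theorem hgen_injective (n : ℤ) : Function.Injective fun v => G.Hgen v n := by
  intro v w h
  have hw : (w, n) ∈ G.Hgen v n := (congrFun h _).mpr (G.mem_hgen_self w n)
  exact (G.mem_hgen_same_level_iff.mp hw).symm

theorem mem_lt_iff {k : ℤ} {H : Set (G.V × ℤ)} {p : G.V × ℤ} :
    p ∈ G.lt k H ↔ (p.1, p.2 - k) ∈ H := by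
  constructor
  · rintro ⟨q, hq, rfl⟩
    simpa using hq
  · exact fun h => ⟨(p.1, p.2 - k), h, by simp⟩

theorem lt_one_hgen (v : G.V) (n : ℤ) : G.lt 1 (G.Hgen v n) = G.Hgen v (n + 1) := by
  ext ⟨w, m⟩
  simp only [mem_lt_iff, mem_hgen_iff]
  constructor <;> rintro ⟨k, hk, hp⟩ <;> exact ⟨k, by omega, hp⟩

theorem lt_one_hgen_subset_iff {v w : G.V} {n : ℤ} :
    G.lt 1 (G.Hgen w n) ⊆ G.Hgen v n ↔ (G.edgesBetween v w).Nonempty := by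
  rw [lt_one_hgen, ← pathRel_one_iff]
  constructor
  · intro h
    obtain ⟨k, hk, hp⟩ := G.mem_hgen_iff.mp (h (G.mem_hgen_self w (n + 1)))
    obtain rfl : k = 1 := by omega
    exact hp
  · exact fun hp => G.hgen_subset (G.hgen_hereditary v n) (G.mem_hgen_iff.mpr ⟨1, by simp, hp⟩)

/-- No edge of the skew product enters `H(v, n)` at `(v, n)`, its only vertex on level `n`, so
removing `(v, n)` leaves a hereditary set. -/
theorem uniquePred_hgen (v : G.V) (n : ℤ) : G.UniquePred (G.Hgen v n) := by
  refine ⟨G.Hgen v n \ {(v, n)}, ?_, Set.sdiff_singleton_ssubset.mpr (G.mem_hgen_self v n), ?_⟩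
  · rintro ⟨f, j⟩ ⟨hf, hne⟩
    refine ⟨G.hgen_hereditary v n (f, j) hf, fun heq => ?_⟩
    have hj := G.le_of_mem_hgen hf
    simp only [skew, Set.mem_singleton_iff, Prod.mk.injEq] at heq
    omega
  · intro K hK hKL p hp
    refine ⟨hKL.subset hp, fun hpv => hKL.not_subset (G.hgen_subset hK ?_)⟩
    rwa [← Set.mem_singleton_iff.mp hpv]

/-- A hereditary set with a unique predecessor `K` is generated by one of its vertices, since
otherwise it is the union of hereditary sets strictly below it, all contained in `K`. -/
theorem exists_hgen_eq_of_uniquePred {L : Set (G.V × ℤ)} (hL : G.skew.Hereditary L)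
    (hpred : G.UniquePred L) : ∃ p ∈ L, G.Hgen p.1 p.2 = L := by
  obtain ⟨K, -, hKL, hKmax⟩ := hpred
  by_contra! hne
  refine hKL.not_subset fun p hp => hKmax _ (G.hgen_hereditary p.1 p.2) ?_ (G.mem_hgen_self _ _)
  exact (G.hgen_subset hL hp).ssubset_of_ne (hne p hp)

theorem mem_lt_one_h0 {p : G.V × ℤ} : p ∈ G.lt 1 G.H0 ↔ 1 ≤ p.2 := by
  rw [mem_lt_iff]
  exact Int.sub_nonneg

theorem hgen_zero_subset_h0 (v : G.V) : G.Hgen v 0 ⊆ G.H0 :=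
  fun ⟨_, _⟩ hp => G.le_of_mem_hgen hp

theorem ebar0_eq_v0 : G.Ebar0 = G.V0 := by
  ext L
  constructor
  · rintro ⟨⟨hL, hpred⟩, hLH0, hLlt⟩
    obtain ⟨⟨w, m⟩, hwL, hm⟩ := Set.not_subset.mp hLlt
    obtain ⟨⟨u, j⟩, huL, rfl⟩ := G.exists_hgen_eq_of_uniquePred hL hpred
    have hj : 0 ≤ j := hLH0 huL
    have hjm : j ≤ m := G.le_of_mem_hgen hwL
    have hm : m < 1 := not_le.mp (mt (G.mem_lt_one_h0 (p := (w, m))).mpr hm)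
    obtain rfl : j = 0 := by omega
    exact ⟨u, rfl⟩
  · rintro ⟨v, rfl⟩
    refine ⟨⟨G.hgen_hereditary v 0, G.uniquePred_hgen v 0⟩, G.hgen_zero_subset_h0 v,
      fun h => ?_⟩
    have := G.mem_lt_one_h0.mp (h (G.mem_hgen_self v 0))
    omega

noncomputable def hgenEquiv : G.V ≃ G.Ebar.V :=
  Equiv.ofBijective (fun v => ⟨G.Hgen v 0, G.ebar0_eq_v0 ▸ ⟨v, rfl⟩⟩)
    ⟨fun _ _ h => G.hgen_injective 0 (congrArg Subtype.val h), fun L => by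
      obtain ⟨v, hv⟩ : L.1 ∈ G.V0 := G.ebar0_eq_v0 ▸ L.2
      exact ⟨v, Subtype.ext hv.symm⟩⟩

theorem ebar_edgesBetween_nonempty_iff (H K : G.Ebar.V) :
    (G.Ebar.edgesBetween H K).Nonempty ↔ G.lt 1 K.1 ⊆ H.1 := by
  constructor
  · rintro ⟨t, rfl, rfl⟩
    exact t.2.2.2
  · exact fun h => ⟨⟨(H.1, 0, K.1), H.2, K.2, h⟩, rfl, rfl⟩

theorem ebar_amplified : G.Ebar.Amplified := by
  intro H K
  by_cases h : G.lt 1 K.1 ⊆ H.1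
  · refine Or.inr (Set.infinite_of_injective_forall_mem
      (f := fun n : ℕ => (⟨(H.1, n, K.1), H.2, K.2, h⟩ : G.Ebar.E)) ?_ fun _ => ⟨rfl, rfl⟩)
    exact fun n m hnm => congrArg (fun t : G.Ebar.E => t.1.2.1) hnm
  · exact Or.inl <| Set.not_nonempty_iff_eq_empty.mp <|
      mt (G.ebar_edgesBetween_nonempty_iff H K).mp h

instance [Countable G.V] : Countable G.Ebar.V :=
  Countable.of_equiv _ G.hgenEquiv

instance [Countable G.V] : Countable G.Ebar.E :=
  Function.Injective.countable (f := fun t : G.Ebar.E => (G.Ebar.s t, t.1.2.1, G.Ebar.r t))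
    fun t t' h => by
      simp only [Ebar, Prod.mk.injEq, Subtype.mk.injEq] at h
      exact Subtype.ext (Prod.ext h.1 (Prod.ext h.2.1 h.2.2))

end DirGraph

open DirGraph

theorem ebar_iso (G : DirGraph) [Countable G.V] [Countable G.E] (hG : G.Amplified) :
    Countable G.Ebar.V ∧ Countable G.Ebar.E ∧ G.Ebar.Amplified ∧
      ∃ (φ₀ : G.V ≃ G.Ebar.V) (φ₁ : G.E ≃ G.Ebar.E),
        (∀ e : G.E, φ₀ (G.r e) = G.Ebar.r (φ₁ e)) ∧
        (∀ e : G.E, φ₀ (G.s e) = G.Ebar.s (φ₁ e)) ∧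
        ∀ v : G.V, (φ₀ v).1 = G.Hgen v 0 := by
  have hadj (v w : G.V) : (G.edgesBetween v w).Nonempty ↔
      (G.Ebar.edgesBetween (G.hgenEquiv v) (G.hgenEquiv w)).Nonempty := by
    rw [ebar_edgesBetween_nonempty_iff, ← lt_one_hgen_subset_iff]
    rfl
  obtain ⟨φ₁, hφ₁⟩ := exists_edge_equiv_of_amplified hG G.ebar_amplified G.hgenEquiv hadj
  exact ⟨inferInstance, inferInstance, G.ebar_amplified, G.hgenEquiv, φ₁,
    fun e => (hφ₁ e).2.symm, fun e => (hφ₁ e).1.symm, fun _ => rfl⟩
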